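/- arXiv:1307.4766 — 4 statements merged into one kernel-verified Lean document; each statement's English description precedes it below -/
import Mathlib

section
/- For any two standard Young tableaux T and S of the same shape λ of size d, there is a unique permutation σ ∈ S_d with σT = S, and σ can be written as a product of admissible Coxeter transpositions, i.e., there is a chain T = T_0, T_1, ..., T_m = S of standard tableaux of shape λ with T_{k+1} = s_{i_k} T_k for Coxeter generators s_{i_k} = (i_k, i_k+1). -/
/-- A filling `T : μ.cells ≃ Fin d` of a Young diagram is standard if its entries increase
along each row and along each column. -/
def IsStandardFilling {μ : YoungDiagram} {d : ℕ} (T : ↥μ.cells ≃ Fin d) : Prop :=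
  ∀ a b : ↥μ.cells,
    (((a : ℕ × ℕ).1 = (b : ℕ × ℕ).1 ∧ (a : ℕ × ℕ).2 < (b : ℕ × ℕ).2) ∨
     ((a : ℕ × ℕ).2 = (b : ℕ × ℕ).2 ∧ (a : ℕ × ℕ).1 < (b : ℕ × ℕ).1)) → T a < T b

namespace AdmissibleChainAux

variable {μ : YoungDiagram} {d : ℕ}

/-- Row of the cell holding value `v`. -/
def rowOf (T : ↥μ.cells ≃ Fin d) (v : Fin d) : ℕ := ((T.symm v : ℕ × ℕ)).1

/-- A statistic on fillings which strictly increases along admissible swaps fixing a drop. -/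
def stat (T : ↥μ.cells ≃ Fin d) : ℕ := ∑ v : Fin d, (v : ℕ) * rowOf T v

/-- One admissible Coxeter move between standard fillings. -/
def Step (T T' : ↥μ.cells ≃ Fin d) : Prop :=
  IsStandardFilling T ∧ IsStandardFilling T' ∧
  ∃ (i : ℕ) (h : i + 1 < d), ∀ x,
    T' x = Equiv.swap (⟨i, Nat.lt_of_succ_lt h⟩ : Fin d) ⟨i + 1, h⟩ (T x)

/-- `T` has a "drop": some value `i+1` sits in a strictly higher row than `i`. -/
def HasDrop (T : ↥μ.cells ≃ Fin d) : Prop :=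
  ∃ (i : ℕ) (h : i + 1 < d),
    rowOf T ⟨i + 1, h⟩ < rowOf T ⟨i, Nat.lt_of_succ_lt h⟩

lemma swap_mono {i : ℕ} (h : i + 1 < d) {u v : Fin d} (huv : u < v)
    (hne : ¬((u : ℕ) = i ∧ (v : ℕ) = i + 1)) :
    Equiv.swap (⟨i, Nat.lt_of_succ_lt h⟩ : Fin d) ⟨i + 1, h⟩ u
      < Equiv.swap (⟨i, Nat.lt_of_succ_lt h⟩ : Fin d) ⟨i + 1, h⟩ v := by
  set a : Fin d := ⟨i, Nat.lt_of_succ_lt h⟩ with ha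
  set b : Fin d := ⟨i + 1, h⟩ with hb
  have hva : (a : ℕ) = i := rfl
  have hvb : (b : ℕ) = i + 1 := rfl
  have hlt : ∀ p q : Fin d, (p : ℕ) < (q : ℕ) → p < q := fun p q hpq => hpq
  have huv' : (u : ℕ) < (v : ℕ) := huv
  by_cases h1 : u = a
  · have h2 : v ≠ b := fun hv => hne ⟨by rw [h1], by rw [hv]⟩
    have h3 : v ≠ a := fun hv => (ne_of_lt huv) (h1.trans hv.symm)
    rw [h1, Equiv.swap_apply_left, Equiv.swap_apply_of_ne_of_ne h3 h2]
    have h4 : (v : ℕ) ≠ i + 1 := fun hc => h2 (Fin.ext (by omega))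
    have h5 : (u : ℕ) = i := by rw [h1]
    exact hlt _ _ (by omega)
  · by_cases h2 : u = b
    · have h3 : v ≠ a := fun hv => by
        have : (v : ℕ) = i := by rw [hv]
        have : (u : ℕ) = i + 1 := by rw [h2]
        omega
      have h4 : v ≠ b := fun hv => by
        have : (v : ℕ) = i + 1 := by rw [hv]
        have : (u : ℕ) = i + 1 := by rw [h2]
        omega
      rw [h2, Equiv.swap_apply_right, Equiv.swap_apply_of_ne_of_ne h3 h4]
      have h5 : (u : ℕ) = i + 1 := by rw [h2]
      exact hlt _ _ (by omega)
    · rw [Equiv.swap_apply_of_ne_of_ne h1 h2]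
      by_cases h3 : v = a
      · rw [h3, Equiv.swap_apply_left]
        have h4 : (v : ℕ) = i := by rw [h3]
        exact hlt _ _ (by omega)
      · by_cases h4 : v = b
        · rw [h4, Equiv.swap_apply_right]
          have h5 : (v : ℕ) = i + 1 := by rw [h4]
          have h6 : (u : ℕ) ≠ i := fun hc => h1 (Fin.ext (by omega))
          exact hlt _ _ (by omega)
        · rw [Equiv.swap_apply_of_ne_of_ne h3 h4]; exact huv

lemma step_symm {T T' : ↥μ.cells ≃ Fin d} (h : Step T T') : Step T' T := by
  obtain ⟨h1, h2, i, hi, hx⟩ := h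
  refine ⟨h2, h1, i, hi, fun x => ?_⟩
  rw [hx x, Equiv.swap_apply_self]

lemma stat_le (T : ↥μ.cells ≃ Fin d) : stat T ≤ d * (d * μ.colLen 0) := by
  have hterm : ∀ v : Fin d, (v : ℕ) * rowOf T v ≤ d * μ.colLen 0 := by
    intro v
    refine Nat.mul_le_mul (le_of_lt v.isLt) ?_
    have hx : ((T.symm v : ℕ × ℕ)) ∈ μ := by
      rw [← YoungDiagram.mem_cells]; exact (T.symm v).2
    have h1 : (T.symm v : ℕ × ℕ).1 < μ.colLen (T.symm v : ℕ × ℕ).2 := by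
      rw [← YoungDiagram.mem_iff_lt_colLen]; exact hx
    have h2 := μ.colLen_anti 0 (T.symm v : ℕ × ℕ).2 (Nat.zero_le _)
    have : rowOf T v = (T.symm v : ℕ × ℕ).1 := rfl
    omega
  calc stat T ≤ ∑ _v : Fin d, d * μ.colLen 0 := Finset.sum_le_sum fun v _ => hterm v
    _ = d * (d * μ.colLen 0) := by
        rw [Finset.sum_const, Finset.card_univ, Fintype.card_fin, smul_eq_mul]

lemma exists_step (T : ↥μ.cells ≃ Fin d) (hT : IsStandardFilling T) (hD : HasDrop T) :
    ∃ T', Step T T' ∧ IsStandardFilling T' ∧ stat T < stat T' := by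
  obtain ⟨i, h, hdrop⟩ := hD
  set a : Fin d := ⟨i, Nat.lt_of_succ_lt h⟩ with ha
  set b : Fin d := ⟨i + 1, h⟩ with hb
  set σ : Equiv.Perm (Fin d) := Equiv.swap a b with hσ
  set T' : ↥μ.cells ≃ Fin d := T.trans σ with hT'
  have happ : ∀ x, T' x = σ (T x) := fun _ => rfl
  have hstd' : IsStandardFilling T' := by
    intro p q hpq
    have h1 : T p < T q := hT p q hpq
    have h2 : ¬(((T p : Fin d) : ℕ) = i ∧ ((T q : Fin d) : ℕ) = i + 1) := by
      rintro ⟨hp, hq⟩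
      have hpa : T p = a := Fin.ext hp
      have hqb : T q = b := Fin.ext hq
      have hps : p = T.symm a := by rw [← hpa, Equiv.symm_apply_apply]
      have hqs : q = T.symm b := by rw [← hqb, Equiv.symm_apply_apply]
      have hr : ((q : ℕ × ℕ)).1 < ((p : ℕ × ℕ)).1 := by
        rw [hps, hqs]; exact hdrop
      rcases hpq with ⟨he, _⟩ | ⟨_, hl⟩
      · omega
      · omega
    exact swap_mono h h1 h2
  have hrow' : ∀ v, rowOf T' v = rowOf T (σ v) := by
    intro v
    have hs : T'.symm v = T.symm (σ v) := by
      rw [hT']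
      simp only [Equiv.symm_trans_apply, hσ, Equiv.symm_swap]
    unfold rowOf
    rw [hs]
  refine ⟨T', ⟨hT, hstd', i, h, happ⟩, hstd', ?_⟩
  have hrewrite : stat T' = ∑ v : Fin d, ((σ v : Fin d) : ℕ) * rowOf T v := by
    calc stat T' = ∑ v : Fin d, (v : ℕ) * rowOf T (σ v) := by
          unfold stat; exact Finset.sum_congr rfl fun v _ => by rw [hrow']
      _ = ∑ v : Fin d, ((σ v : Fin d) : ℕ) * rowOf T (σ (σ v)) :=
          (Equiv.sum_comp σ (fun v => (v : ℕ) * rowOf T (σ v))).symm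
      _ = ∑ v : Fin d, ((σ v : Fin d) : ℕ) * rowOf T v := by
          refine Finset.sum_congr rfl fun v _ => by rw [hσ, Equiv.swap_apply_self]
  rw [hrewrite]
  unfold stat
  have hba : b ≠ a := by
    intro hc
    have : (b : ℕ) = (a : ℕ) := by rw [hc]
    simp [ha, hb] at this
  have hbmem : b ∈ Finset.univ.erase a := Finset.mem_erase.2 ⟨hba, Finset.mem_univ b⟩
  have dec : ∀ f : Fin d → ℕ, ∑ v : Fin d, f v
      = f a + (f b + ∑ v ∈ (Finset.univ.erase a).erase b, f v) := by
    intro f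
    rw [Finset.add_sum_erase _ f hbmem, Finset.add_sum_erase _ f (Finset.mem_univ a)]
  rw [dec (fun v => (v : ℕ) * rowOf T v), dec (fun v => ((σ v : Fin d) : ℕ) * rowOf T v)]
  have hrest : ∑ v ∈ (Finset.univ.erase a).erase b, ((σ v : Fin d) : ℕ) * rowOf T v
      = ∑ v ∈ (Finset.univ.erase a).erase b, (v : ℕ) * rowOf T v := by
    refine Finset.sum_congr rfl fun v hv => ?_
    have hv1 : v ≠ b := (Finset.mem_erase.1 hv).1
    have hv2 : v ≠ a := (Finset.mem_erase.1 ((Finset.mem_erase.1 hv).2)).1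
    rw [hσ, Equiv.swap_apply_of_ne_of_ne hv2 hv1]
  rw [hrest]
  have hσa : σ a = b := Equiv.swap_apply_left a b
  have hσb : σ b = a := Equiv.swap_apply_right a b
  rw [hσa, hσb]
  have hav : (a : ℕ) = i := rfl
  have hbv : (b : ℕ) = i + 1 := rfl
  have hdrop' : rowOf T b < rowOf T a := hdrop
  rw [hav, hbv]
  have key : i * rowOf T a + (i + 1) * rowOf T b < (i + 1) * rowOf T a + i * rowOf T b := by
    nlinarith [hdrop']
  omega

lemma rowOf_mono (T : ↥μ.cells ≃ Fin d) (hD : ¬ HasDrop T) :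
    ∀ v w : Fin d, v ≤ w → rowOf T v ≤ rowOf T w := by
  have key : ∀ (i : ℕ) (h : i + 1 < d),
      rowOf T ⟨i, Nat.lt_of_succ_lt h⟩ ≤ rowOf T ⟨i + 1, h⟩ := by
    intro i h
    by_contra hc
    push_neg at hc
    exact hD ⟨i, h, hc⟩
  have main : ∀ (n : ℕ) (hn : n < d) (v : Fin d), (v : ℕ) ≤ n → rowOf T v ≤ rowOf T ⟨n, hn⟩ := by
    intro n
    induction n with
    | zero =>
      intro hn v hv
      have : v = ⟨0, hn⟩ := Fin.ext (show (v : ℕ) = 0 by omega)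
      rw [this]
    | succ n ih =>
      intro hn v hv
      rcases Nat.lt_or_ge (v : ℕ) (n + 1) with hlt | hge
      · have h1 := ih (Nat.lt_of_succ_lt hn) v (by omega)
        exact h1.trans (key n hn)
      · have : v = ⟨n + 1, hn⟩ := Fin.ext (show (v : ℕ) = n + 1 by omega)
        rw [this]
  intro v w hvw
  have := main (w : ℕ) w.isLt v hvw
  have hw : (⟨(w : ℕ), w.isLt⟩ : Fin d) = w := Fin.ext rfl
  rwa [hw] at this

lemma lexmin (T : ↥μ.cells ≃ Fin d) (hT : IsStandardFilling T)
    (hmono : ∀ v w : Fin d, v ≤ w → rowOf T v ≤ rowOf T w)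
    (v : Fin d) (y : ↥μ.cells) (hy : v ≤ T y) :
    ((T.symm v : ℕ × ℕ).1 < (y : ℕ × ℕ).1) ∨
      ((T.symm v : ℕ × ℕ).1 = (y : ℕ × ℕ).1 ∧ (T.symm v : ℕ × ℕ).2 ≤ (y : ℕ × ℕ).2) := by
  set x := T.symm v with hx
  have h1 : rowOf T v ≤ rowOf T (T y) := hmono _ _ hy
  have h2 : rowOf T (T y) = (y : ℕ × ℕ).1 := by unfold rowOf; rw [Equiv.symm_apply_apply]
  have h3 : rowOf T v = (x : ℕ × ℕ).1 := rfl
  rcases eq_or_lt_of_le (h3 ▸ h2 ▸ h1) with heq | hlt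
  · rcases eq_or_ne x y with hxy | hxy
    · exact Or.inr ⟨heq, by rw [hxy]⟩
    · have hcol : (x : ℕ × ℕ).2 ≠ (y : ℕ × ℕ).2 := by
        intro hc
        exact hxy (Subtype.ext (Prod.ext heq hc))
      rcases Nat.lt_or_ge (x : ℕ × ℕ).2 (y : ℕ × ℕ).2 with hcc | hcc
      · exact Or.inr ⟨heq, le_of_lt hcc⟩
      · have hyx : T y < T x := hT y x (Or.inl ⟨heq.symm, by omega⟩)
        have : T x = v := by rw [hx, Equiv.apply_symm_apply]
        rw [this] at hyx
        exact absurd hy (not_le_of_gt hyx)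
  · exact Or.inl hlt

lemma eq_of_noDrop (T S : ↥μ.cells ≃ Fin d)
    (hT : IsStandardFilling T) (hS : IsStandardFilling S)
    (hdT : ¬ HasDrop T) (hdS : ¬ HasDrop S) : T = S := by
  have hmT := rowOf_mono T hdT
  have hmS := rowOf_mono S hdS
  have main : ∀ (n : ℕ), ∀ (hn : n < d), T.symm ⟨n, hn⟩ = S.symm ⟨n, hn⟩ := by
    intro n
    induction n using Nat.strong_induction_on with
    | _ n IH =>
      intro hn
      set v : Fin d := ⟨n, hn⟩ with hv
      have IH' : ∀ w : Fin d, w < v → T.symm w = S.symm w := by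
        intro w hw
        have h1 : (w : ℕ) < n := hw
        have h2 : T.symm ⟨(w : ℕ), w.isLt⟩ = S.symm ⟨(w : ℕ), w.isLt⟩ := IH _ h1 w.isLt
        have h3 : (⟨(w : ℕ), w.isLt⟩ : Fin d) = w := Fin.ext rfl
        rwa [h3] at h2
      set x := T.symm v with hx
      set z := S.symm v with hz
      have hvz : v ≤ T z := by
        by_contra hc
        push_neg at hc
        have h1 := IH' (T z) hc
        rw [Equiv.symm_apply_apply] at h1
        have h2 : S z = T z := by
          conv_lhs => rw [h1]
          rw [Equiv.apply_symm_apply]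
        have h3 : S z = v := by rw [hz, Equiv.apply_symm_apply]
        rw [h3] at h2
        exact absurd (h2 ▸ hc) (lt_irrefl v)
      have hvx : v ≤ S x := by
        by_contra hc
        push_neg at hc
        have h1 := IH' (S x) hc
        rw [Equiv.symm_apply_apply] at h1
        have h2 : T x = S x := by
          conv_lhs => rw [← h1]
          rw [Equiv.apply_symm_apply]
        have h3 : T x = v := by rw [hx, Equiv.apply_symm_apply]
        rw [h3] at h2
        exact absurd (h2 ▸ hc) (lt_irrefl v)
      have A := lexmin T hT hmT v z hvz
      have B := lexmin S hS hmS v x hvx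
      rw [← hx] at A
      rw [← hz] at B
      have hr : (x : ℕ × ℕ).1 = (z : ℕ × ℕ).1 := by omega
      have hc : (x : ℕ × ℕ).2 = (z : ℕ × ℕ).2 := by omega
      exact Subtype.ext (Prod.ext hr hc)
  have hsymm : T.symm = S.symm := by
    apply Equiv.ext
    intro v
    have := main (v : ℕ) v.isLt
    have h3 : (⟨(v : ℕ), v.isLt⟩ : Fin d) = v := Fin.ext rfl
    rwa [h3] at this
  calc T = T.symm.symm := (Equiv.symm_symm T).symm
    _ = S.symm.symm := by rw [hsymm]
    _ = S := Equiv.symm_symm S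

lemma reach_aux (n : ℕ) (T S : ↥μ.cells ≃ Fin d)
    (hT : IsStandardFilling T) (hS : IsStandardFilling S)
    (hn : 2 * (d * (d * μ.colLen 0)) - (stat T + stat S) ≤ n) :
    Relation.ReflTransGen Step T S := by
  induction n generalizing T S with
  | zero =>
    by_cases hdT : HasDrop T
    · obtain ⟨T', _, hT'std, hlt⟩ := exists_step T hT hdT
      have h1 := stat_le T'
      have h2 := stat_le T
      have h3 := stat_le S
      exfalso; omega
    · by_cases hdS : HasDrop S
      · obtain ⟨S', _, hS'std, hlt⟩ := exists_step S hS hdS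
        have h1 := stat_le S'
        have h2 := stat_le T
        have h3 := stat_le S
        exfalso; omega
      · rw [eq_of_noDrop T S hT hS hdT hdS]
  | succ n ih =>
    by_cases hdT : HasDrop T
    · obtain ⟨T', hstep, hT'std, hlt⟩ := exists_step T hT hdT
      have h1 := stat_le T'
      exact Relation.ReflTransGen.head hstep (ih T' S hT'std hS (by omega))
    · by_cases hdS : HasDrop S
      · obtain ⟨S', hstep, hS'std, hlt⟩ := exists_step S hS hdS
        have h1 := stat_le S'
        exact (ih T S' hT hS'std (by omega)).tail (step_symm hstep)
      · rw [eq_of_noDrop T S hT hS hdT hdS]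

lemma chain_of_reach (T S : ↥μ.cells ≃ Fin d) (hS : IsStandardFilling S)
    (h : Relation.ReflTransGen Step T S) :
    ∃ (m : ℕ) (chain : Fin (m + 1) → (↥μ.cells ≃ Fin d)),
      chain 0 = T ∧ chain (Fin.last m) = S ∧
      (∀ k, IsStandardFilling (chain k)) ∧
      (∀ k : Fin m, ∃ (i : ℕ) (h : i + 1 < d), ∀ x,
        chain k.succ x =
          Equiv.swap (⟨i, Nat.lt_of_succ_lt h⟩ : Fin d) ⟨i + 1, h⟩ (chain k.castSucc x)) := by
  induction h using Relation.ReflTransGen.head_induction_on with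
  | refl =>
    refine ⟨0, fun _ => S, rfl, rfl, fun _ => hS, fun k => k.elim0⟩
  | head hac _ ih =>
    rename_i a c _
    obtain ⟨m, chain, h0, hlast, hstd, hstep⟩ := ih
    refine ⟨m + 1, Fin.cons a chain, Fin.cons_zero _ _, ?_, ?_, ?_⟩
    · have : (Fin.last (m + 1)) = Fin.succ (Fin.last m) := rfl
      rw [this, Fin.cons_succ]
      exact hlast
    · intro k
      refine Fin.cases ?_ ?_ k
      · rw [Fin.cons_zero]; exact hac.1
      · intro j
        rw [Fin.cons_succ]
        exact hstd j
    · intro k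
      refine Fin.cases ?_ ?_ k
      · obtain ⟨_, _, i, hi, hx⟩ := hac
        refine ⟨i, hi, fun x => ?_⟩
        have e1 : (Fin.cons a chain : Fin (m + 2) → _) (Fin.succ 0) = chain 0 := Fin.cons_succ _ _ _
        have e2 : (Fin.cons a chain : Fin (m + 2) → _) (Fin.castSucc 0) = a := by
          rw [Fin.castSucc_zero, Fin.cons_zero]
        rw [e1, e2, h0]
        exact hx x
      · intro j
        obtain ⟨i, hi, hx⟩ := hstep j
        refine ⟨i, hi, fun x => ?_⟩
        have e1 : (Fin.cons a chain : Fin (m + 2) → _) (Fin.succ (Fin.succ j)) = chain (Fin.succ j) :=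
          Fin.cons_succ _ _ _
        have e2 : (Fin.cons a chain : Fin (m + 2) → _) (Fin.castSucc (Fin.succ j)) = chain (Fin.castSucc j) := by
          rw [← Fin.succ_castSucc, Fin.cons_succ]
        rw [e1, e2]
        exact hx x

end AdmissibleChainAux

/-- For any two standard Young tableaux `T`, `S` of the same shape there is a unique
permutation `σ` with `σT = S`, and `σ` is a product of admissible Coxeter transpositions:
there is a chain of standard tableaux from `T` to `S`, consecutive ones differing by a
Coxeter generator `s_i = (i, i+1)`. -/
theorem exists_unique_perm_and_admissible_chain
    (μ : YoungDiagram) (d : ℕ) (T S : ↥μ.cells ≃ Fin d)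
    (hT : IsStandardFilling T) (hS : IsStandardFilling S) :
    (∃! σ : Equiv.Perm (Fin d), ∀ x, σ (T x) = S x) ∧
    (∃ (m : ℕ) (chain : Fin (m + 1) → (↥μ.cells ≃ Fin d)),
      chain 0 = T ∧ chain (Fin.last m) = S ∧
      (∀ k, IsStandardFilling (chain k)) ∧
      (∀ k : Fin m, ∃ (i : ℕ) (h : i + 1 < d), ∀ x,
        chain k.succ x =
          Equiv.swap (⟨i, Nat.lt_of_succ_lt h⟩ : Fin d) ⟨i + 1, h⟩ (chain k.castSucc x))) := by
  constructor
  · refine ⟨T.symm.trans S, fun x => ?_, fun σ' hσ' => ?_⟩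
    · simp
    · apply Equiv.ext
      intro v
      have := hσ' (T.symm v)
      simpa using this
  · have hreach := AdmissibleChainAux.reach_aux (2 * (d * (d * μ.colLen 0))) T S hT hS (by omega)
    exact AdmissibleChainAux.chain_of_reach T S hS hreach
end

section
/- The content vector determines the standard tableau: if T and S are standard Young tableaux (possibly of different shapes) of size d with a_k(T) = a_k(S) for all 1 ≤ k ≤ d, then T = S (in particular they have the same shape). -/
/-- The content of the box of `T` containing the entry `k`: column index minus row index. -/
def tabContent {μ : YoungDiagram} {d : ℕ} (T : ↥μ.cells ≃ Fin d) (k : Fin d) : ℤ :=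
  ((T.symm k : ℕ × ℕ).2 : ℤ) - ((T.symm k : ℕ × ℕ).1 : ℤ)

namespace IsStandardFilling

variable {μ ν : YoungDiagram} {d : ℕ} {T : ↥μ.cells ≃ Fin d} {S : ↥ν.cells ≃ Fin d}

theorem strictMono (hT : IsStandardFilling T) : StrictMono T := by
  intro a b hab
  obtain ⟨⟨i, j⟩, ha⟩ := a
  obtain ⟨⟨i', j'⟩, hb⟩ := b
  have hab' : (i, j) < (i', j') := hab
  obtain ⟨hi, hj⟩ := Prod.mk_le_mk.mp hab'.le
  rcases hi.eq_or_lt with rfl | hi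
  · exact hT _ _ (.inl ⟨rfl, Prod.mk_lt_mk_iff_right.mp hab'⟩)
  rcases hj.eq_or_lt with rfl | hj
  · exact hT _ _ (.inr ⟨rfl, hi⟩)
  have hc : (i, j') ∈ μ.cells :=
    (μ.mem_cells _).2 (μ.up_left_mem hi.le le_rfl ((μ.mem_cells _).1 hb))
  exact (hT ⟨_, ha⟩ ⟨_, hc⟩ (.inl ⟨rfl, hj⟩)).trans (hT ⟨_, hc⟩ ⟨_, hb⟩ (.inr ⟨rfl, hi⟩))

theorem fst_le_of_symm_eq_of_lt (hS : IsStandardFilling S) {k : Fin d}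
    (hbelow : ∀ m < k, (T.symm m : ℕ × ℕ) = S.symm m)
    (hk : tabContent T k = tabContent S k) :
    (S.symm k : ℕ × ℕ).1 ≤ (T.symm k : ℕ × ℕ).1 := by
  unfold tabContent at hk
  by_contra! hrow
  have hlt : (T.symm k : ℕ × ℕ) < S.symm k := Prod.lt_iff.mpr (.inl ⟨hrow, by omega⟩)
  have ha : (T.symm k : ℕ × ℕ) ∈ ν.cells := ν.isLowerSet hlt.le (S.symm k).2
  have hm : S ⟨_, ha⟩ < k := by
    simpa using hS.strictMono (show (⟨_, ha⟩ : ↥ν.cells) < S.symm k from hlt)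
  have : T.symm (S ⟨_, ha⟩) = T.symm k := by
    apply Subtype.ext
    rw [hbelow _ hm, Equiv.symm_apply_apply]
  exact hm.ne (T.symm.injective this)

end IsStandardFilling

theorem Finset.mem_of_equiv_symm_coe_eq {α β : Type*} {s t : Finset α} (e : ↥s ≃ β) (f : ↥t ≃ β)
    (h : ∀ k, (e.symm k : α) = f.symm k) {p : α} (hp : p ∈ s) : p ∈ t := by
  have hk : p = f.symm (e ⟨p, hp⟩) := by simpa using h (e ⟨p, hp⟩)
  rw [hk]
  exact Subtype.mem _

/-- The content vector determines a standard tableau: two standard tableaux of size `d`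
(possibly of a priori different shapes) with equal content vectors coincide: the shapes are
equal and the entries occupy the same boxes. -/
theorem content_vector_determines_standard_tableau
    (μ ν : YoungDiagram) (d : ℕ)
    (T : ↥μ.cells ≃ Fin d) (S : ↥ν.cells ≃ Fin d)
    (hT : IsStandardFilling T) (hS : IsStandardFilling S)
    (hc : ∀ k : Fin d, tabContent T k = tabContent S k) :
    μ = ν ∧ ∀ k : Fin d, (T.symm k : ℕ × ℕ) = (S.symm k : ℕ × ℕ) := by
  have hsame : ∀ k : Fin d, (T.symm k : ℕ × ℕ) = (S.symm k : ℕ × ℕ) := by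
    intro k
    induction k using WellFoundedLT.induction with
    | ind k ih =>
      have hST := hS.fst_le_of_symm_eq_of_lt ih (hc k)
      have hTS := hT.fst_le_of_symm_eq_of_lt (fun m hm => (ih m hm).symm) (hc k).symm
      have hk := hc k
      unfold tabContent at hk
      exact Prod.ext (le_antisymm hTS hST) (by omega)
  refine ⟨SetLike.ext fun p => ?_, hsame⟩
  simp only [← YoungDiagram.mem_cells]
  exact ⟨Finset.mem_of_equiv_symm_coe_eq T S hsame,
    Finset.mem_of_equiv_symm_coe_eq S T fun k => (hsame k).symm⟩
end

section
/- For the normalized Haar measure μ on U_n (n ≥ 1), ∫ |u_{11}|⁴ dμ(U) = 2/(n(n+1)). -/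
open MeasureTheory Matrix

noncomputable instance unitaryGroupMeasurableSpace (n : ℕ) :
    MeasurableSpace (Matrix.unitaryGroup (Fin n) ℂ) := borel _

/-!
Write `a = ∫ |u_ij|⁴ dμ`. For a unit vector `v`, completing `v` to a unitary matrix `V` and using
left invariance under `V⁻¹` shows that `⟨v, U e_j⟩` has the same law as `u_ij`; by homogeneity
`∫ |⟨v, U e_j⟩|⁴ dμ = ‖v‖⁴ a` for every `v`. Polarising with `v = e_k + c e_l` over the fourth
roots of unity `c` gives `∫ |u_kj|² |u_lj|² dμ = a / 2` for `k ≠ l`, and integrating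
`(∑_k |u_kj|²)² = 1` yields `1 = n a + n (n - 1) a / 2`.
-/

open Finset

namespace Complex

theorem sum_range_four_norm_add_I_pow_mul_pow_four (z w : ℂ) :
    ∑ p ∈ range 4, ‖z + I ^ p * w‖ ^ 4 =
      4 * ‖z‖ ^ 4 + 4 * ‖w‖ ^ 4 + 16 * (‖z‖ ^ 2 * ‖w‖ ^ 2) := by
  have h2 (y : ℂ) : ‖y‖ ^ 2 = y.re ^ 2 + y.im ^ 2 := by rw [Complex.sq_norm, normSq_apply]; ring
  have h4 (y : ℂ) : ‖y‖ ^ 4 = (y.re ^ 2 + y.im ^ 2) ^ 2 := by rw [← h2]; ring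
  simp only [sum_range_succ, sum_range_zero, zero_add, pow_zero, pow_one, I_sq, I_pow_three,
    one_mul, neg_mul]
  simp only [h2, h4, add_re, add_im, mul_re, mul_im, I_re, I_im, neg_re, neg_im]
  ring

end Complex

namespace Matrix.UnitaryGroup

section Fintype

variable {ι : Type*} [Fintype ι] [DecidableEq ι]

instance : CompactSpace (unitaryGroup ι ℂ) := by
  refine isCompact_iff_compactSpace.mp <| .of_isClosed_subset
    (isCompact_univ_pi fun _ => isCompact_univ_pi fun _ => isCompact_closedBall (0 : ℂ) 1)
    isClosed_unitary fun U hU i _ j _ => ?_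
  simpa using entry_norm_bound_of_unitary hU i j

@[fun_prop]
theorem continuous_entry (i j : ι) : Continuous fun U : unitaryGroup ι ℂ => U.1 i j :=
  continuous_subtype_val.matrix_elem i j

theorem sum_norm_sq_entry (U : unitaryGroup ι ℂ) (j : ι) : ∑ k, ‖U.1 k j‖ ^ 2 = 1 := by
  have h : ((U : Matrix ι ι ℂ)ᴴ * (U : Matrix ι ι ℂ)) j j = 1 := by
    rw [← star_eq_conjTranspose, mem_unitaryGroup_iff'.mp U.2, one_apply_eq]
  simp only [Matrix.mul_apply, conjTranspose_apply, RCLike.star_def, Complex.conj_mul'] at h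
  exact_mod_cast h

theorem exists_entry_eq_of_norm_eq_one {v : EuclideanSpace ℂ ι} (hv : ‖v‖ = 1) (i : ι) :
    ∃ V : unitaryGroup ι ℂ, ∀ m, V.1 m i = v m := by
  have hv' : Orthonormal ℂ (({i} : Set ι).domRestrict fun _ => v) :=
    ⟨fun _ => hv, fun a b hab => absurd (Subsingleton.elim a b) hab⟩
  obtain ⟨b, hb⟩ := hv'.exists_orthonormalBasis_extension_of_card_eq (by simp)
  refine ⟨⟨_, (EuclideanSpace.basisFun ι ℂ).toMatrix_orthonormalBasis_mem_unitary b⟩, fun m => ?_⟩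
  simp [Module.Basis.toMatrix_apply, hb i rfl]

end Fintype

variable {n : ℕ}

instance : BorelSpace (unitaryGroup (Fin n) ℂ) := ⟨rfl⟩

theorem integrable_of_continuous (μ : Measure (unitaryGroup (Fin n) ℂ)) [IsFiniteMeasure μ]
    {f : unitaryGroup (Fin n) ℂ → ℝ} (hf : Continuous f) : Integrable f μ :=
  hf.integrable_of_hasCompactSupport (.of_compactSpace f)

variable (μ : Measure (unitaryGroup (Fin n) ℂ)) [μ.IsMulLeftInvariant]

theorem integral_comp_sum_star_mul_entry {E : Type*} [NormedAddCommGroup E] [NormedSpace ℝ E]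
    (f : ℂ → E) {v : EuclideanSpace ℂ (Fin n)} (hv : ‖v‖ = 1) (i j : Fin n) :
    ∫ U, f (∑ m, star (v m) * U.1 m j) ∂μ = ∫ U, f (U.1 i j) ∂μ := by
  obtain ⟨V, hV⟩ := exists_entry_eq_of_norm_eq_one hv i
  calc ∫ U, f (∑ m, star (v m) * U.1 m j) ∂μ = ∫ U, f ((V⁻¹ * U).1 i j) ∂μ := by
        simp [Matrix.mul_apply, hV]
    _ = ∫ U, f (U.1 i j) ∂μ := integral_mul_left_eq_self (fun U => f (U.1 i j)) V⁻¹

theorem integral_norm_sum_star_mul_entry_pow_four (v : EuclideanSpace ℂ (Fin n)) (i j : Fin n) :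
    ∫ U, ‖∑ m, star (v m) * U.1 m j‖ ^ 4 ∂μ = ‖v‖ ^ 4 * ∫ U, ‖U.1 i j‖ ^ 4 ∂μ := by
  rcases eq_or_ne v 0 with rfl | hv
  · simp
  obtain ⟨u, hu, hvu⟩ : ∃ u : EuclideanSpace ℂ (Fin n), ‖u‖ = 1 ∧ v = (‖v‖ : ℂ) • u :=
    ⟨_, norm_smul_inv_norm hv, by rw [smul_smul]; simp [hv]⟩
  calc ∫ U, ‖∑ m, star (v m) * U.1 m j‖ ^ 4 ∂μ
      = ∫ U, ‖v‖ ^ 4 * ‖∑ m, star (u m) * U.1 m j‖ ^ 4 ∂μ := by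
        congr with U
        conv_lhs => rw [hvu]
        simp [mul_assoc, ← mul_sum, mul_pow]
    _ = ‖v‖ ^ 4 * ∫ U, ‖U.1 i j‖ ^ 4 ∂μ := by
        rw [integral_const_mul,
          integral_comp_sum_star_mul_entry μ (‖·‖ ^ 4) hu i j]

theorem integral_norm_entry_pow_four_eq (k i j : Fin n) :
    ∫ U, ‖U.1 k j‖ ^ 4 ∂μ = ∫ U, ‖U.1 i j‖ ^ 4 ∂μ := by
  simpa using integral_norm_sum_star_mul_entry_pow_four μ (EuclideanSpace.single k 1) i j

theorem integral_norm_entry_add_mul_entry_pow_four {k l : Fin n} (hkl : k ≠ l) {c : ℂ}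
    (hc : ‖c‖ = 1) (i j : Fin n) :
    ∫ U, ‖U.1 k j + c * U.1 l j‖ ^ 4 ∂μ = 4 * ∫ U, ‖U.1 i j‖ ^ 4 ∂μ := by
  set v := EuclideanSpace.single k (1 : ℂ) + EuclideanSpace.single l (star c)
  have hv : ‖v‖ ^ 2 = 2 := by
    rw [sq, norm_add_sq_eq_norm_sq_add_norm_sq_of_inner_eq_zero (𝕜 := ℂ) _ _
      (by simp [EuclideanSpace.inner_single_left, hkl])]
    simp only [PiLp.norm_single, norm_one, mul_one, RCLike.star_def, RCLike.norm_conj, hc]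
    norm_num
  have hsum (U : unitaryGroup (Fin n) ℂ) : ∑ m, star (v m) * U.1 m j = U.1 k j + c * U.1 l j := by
    simp [v, add_mul, sum_add_distrib, PiLp.single_apply, apply_ite (starRingEnd ℂ), ite_mul]
  rw [show (4 : ℝ) = ‖v‖ ^ 4 by rw [show 4 = 2 * 2 from rfl, pow_mul, hv]; norm_num,
    ← integral_norm_sum_star_mul_entry_pow_four μ v i j]
  simp_rw [hsum]

theorem integral_norm_sq_entry_mul_norm_sq_entry [IsFiniteMeasure μ] (k l i j : Fin n) :
    ∫ U, ‖U.1 k j‖ ^ 2 * ‖U.1 l j‖ ^ 2 ∂μ =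
      if k = l then ∫ U, ‖U.1 i j‖ ^ 4 ∂μ else (∫ U, ‖U.1 i j‖ ^ 4 ∂μ) / 2 := by
  split_ifs with hkl
  · subst hkl
    simp_rw [← pow_add]
    exact integral_norm_entry_pow_four_eq μ k i j
  have hpolar : ∑ p ∈ range 4, ∫ U, ‖U.1 k j + Complex.I ^ p * U.1 l j‖ ^ 4 ∂μ =
      16 * ∫ U, ‖U.1 i j‖ ^ 4 ∂μ := by
    rw [sum_congr rfl fun p _ =>
      integral_norm_entry_add_mul_entry_pow_four μ hkl (c := Complex.I ^ p) (by simp) i j,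
      sum_const, card_range, nsmul_eq_mul]
    ring
  have hint {f : unitaryGroup (Fin n) ℂ → ℝ} (hf : Continuous f) : Integrable f μ :=
    integrable_of_continuous μ hf
  rw [← integral_finsetSum _ fun p _ => hint (by fun_prop)] at hpolar
  simp_rw [Complex.sum_range_four_norm_add_I_pow_mul_pow_four] at hpolar
  rw [integral_add (hint (by fun_prop)) (hint (by fun_prop)),
    integral_add (hint (by fun_prop)) (hint (by fun_prop)),
    integral_const_mul, integral_const_mul, integral_const_mul,
    integral_norm_entry_pow_four_eq μ k i j, integral_norm_entry_pow_four_eq μ l i j] at hpolar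
  linarith

end Matrix.UnitaryGroup

/-- For the normalized Haar measure `μ` on `U_n` (`n ≥ 1`), characterized as a
left-translation invariant probability measure, `∫ |u₁₁|⁴ dμ(U) = 2/(n(n+1))`. -/
theorem haar_integral_abs_fourth_entry
    (n : ℕ) (hn : 0 < n) (μ : Measure (Matrix.unitaryGroup (Fin n) ℂ))
    [IsProbabilityMeasure μ]
    (hinv : ∀ V : Matrix.unitaryGroup (Fin n) ℂ, μ.map (fun U => V * U) = μ) :
    (∫ U : Matrix.unitaryGroup (Fin n) ℂ,
        ‖(U : Matrix (Fin n) (Fin n) ℂ) ⟨0, hn⟩ ⟨0, hn⟩‖ ^ 4 ∂μ) =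
      2 / (n * (n + 1)) := by
  have : μ.IsMulLeftInvariant := ⟨hinv⟩
  set i : Fin n := ⟨0, hn⟩
  have hint (k l : Fin n) : Integrable (fun U => ‖U.1 k i‖ ^ 2 * ‖U.1 l i‖ ^ 2) μ :=
    UnitaryGroup.integrable_of_continuous μ (by fun_prop)
  have hone : ∫ U, ∑ k, ∑ l, ‖U.1 k i‖ ^ 2 * ‖U.1 l i‖ ^ 2 ∂μ = 1 := by
    simp [← sum_mul_sum, UnitaryGroup.sum_norm_sq_entry]
  rw [integral_finsetSum _ fun k _ => integrable_finsetSum _ fun l _ => hint k l] at hone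
  simp_rw [integral_finsetSum _ fun l _ => hint _ l,
    UnitaryGroup.integral_norm_sq_entry_mul_norm_sq_entry μ _ _ i i] at hone
  simp only [sum_ite, filter_eq, filter_ne, mem_univ, ↓reduceIte, sum_const, card_singleton,
    one_smul, card_erase_of_mem, card_univ, Fintype.card_fin, nsmul_eq_mul, smul_add] at hone
  rw [Nat.cast_sub hn, Nat.cast_one] at hone
  rw [eq_div_iff (by positivity)]
  linear_combination 2 * hone
end

section
/- If the multi-indices J = (j_1,...,j_d) and L = (l_1,...,l_d) with entries in {1,...,n} are not of the same type (i.e., there is no σ ∈ S_d with j_{σ(k)} = l_k for all k), then ∫ u_{1,j_1} ⋯ u_{1,j_d} · conj(u_{1,l_1}) ⋯ conj(u_{1,l_d}) dμ(U) = 0 over U_n with Haar measure μ. -/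
/-!
A Haar probability measure on the compact group `U_n` is also right invariant. Right
translation by the diagonal unitary `diag(1, …, ζ, …, 1)`, with `ζ` in position `j` and
`|ζ| = 1`, multiplies the monomial `u_{1,J} conj(u_{1,L})` by `ζ ^ (a - b)`, where `a` and `b`
count the occurrences of `j` in `J` and in `L`. If `J` and `L` are not of the same type, some `j`
has `a ≠ b`, and choosing `ζ ^ (a - b) = -1` shows that the integral equals its own negative.
-/

open MeasureTheory Matrix

open Finset

theorem isMulRightInvariant_of_compactSpace {G : Type*} [Group G] [TopologicalSpace G]
    [IsTopologicalGroup G] [CompactSpace G] [MeasurableSpace G] [BorelSpace G]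
    (μ : Measure G) [IsProbabilityMeasure μ] [μ.IsMulLeftInvariant] : μ.IsMulRightInvariant := by
  have : μ.IsHaarMeasure :=
    Measure.isHaarMeasure_of_isCompact_nonempty_interior μ Set.univ isCompact_univ (by simp)
      (by simp) (by simp)
  refine ⟨fun g => ?_⟩
  have : IsProbabilityMeasure (μ.map (· * g)) :=
    Measure.isProbabilityMeasure_map (measurable_mul_const g).aemeasurable
  exact Measure.isHaarMeasure_eq_of_isProbabilityMeasure _ _

theorem integral_eq_zero_of_apply_mul_right_eq_mul {G 𝕜 : Type*} [Group G] [MeasurableSpace G]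
    [MeasurableMul G] [RCLike 𝕜] (μ : Measure G) [μ.IsMulRightInvariant] {F : G → 𝕜} {g : G}
    {c : 𝕜} (hc : c ≠ 1) (hF : ∀ x, F (x * g) = c * F x) : ∫ x, F x ∂μ = 0 := by
  have h := integral_mul_right_eq_self F g (μ := μ)
  simp_rw [hF, integral_const_mul] at h
  have : (c - 1) * ∫ x, F x ∂μ = 0 := by rw [sub_mul, h, one_mul, sub_self]
  exact (mul_eq_zero.mp this).resolve_left (sub_ne_zero.mpr hc)

theorem exists_card_fiber_ne_of_forall_perm {ι α : Type*} [Fintype ι] [DecidableEq α]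
    {J L : ι → α} (h : ¬ ∃ σ : Equiv.Perm ι, ∀ k, J (σ k) = L k) :
    ∃ j, #{k | J k = j} ≠ #{k | L k = j} := by
  by_contra! hc
  have e j : {k // L k = j} ≃ {k // J k = j} :=
    Fintype.equivOfCardEq <| by simp only [Fintype.card_subtype, hc j]
  exact h ⟨Equiv.ofFiberEquiv e, Equiv.ofFiberEquiv_map e⟩

theorem prod_mulSingle_comp {ι α M : Type*} [Fintype ι] [DecidableEq α] [CommMonoid M]
    (J : ι → α) (j : α) (z : M) : ∏ k, (Pi.mulSingle j z : α → M) (J k) = z ^ #{k | J k = j} := by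
  simp [Pi.mulSingle_apply, Finset.prod_ite]

theorem Complex.exists_mem_unitary_zpow_eq_neg_one {c : ℤ} (hc : c ≠ 0) :
    ∃ ζ ∈ unitary ℂ, ζ ^ c = -1 := by
  refine ⟨exp (Real.pi * I / c), ?_, ?_⟩
  · rw [Unitary.mem_iff_star_mul_self, star_def, ← exp_conj, ← exp_add]
    simp [neg_div]
  · rw [← exp_int_mul, mul_div_cancel₀ _ (by exact_mod_cast hc), exp_pi_mul_I]

namespace Matrix

theorem diagonal_mem_unitaryGroup {n α : Type*} [Fintype n] [DecidableEq n] [CommRing α]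
    [StarRing α] {f : n → α} (hf : ∀ i, f i ∈ unitary α) :
    diagonal f ∈ unitaryGroup n α := by
  rw [mem_unitaryGroup_iff, star_eq_conjTranspose, diagonal_conjTranspose, diagonal_mul_diagonal,
    show (fun i => f i * star f i) = 1 from funext fun i => Unitary.mul_star_self_of_mem (hf i)]
  exact diagonal_one

theorem isCompact_unitaryGroup (n 𝕜 : Type*) [Fintype n] [DecidableEq n] [RCLike 𝕜] :
    IsCompact (unitaryGroup n 𝕜 : Set (Matrix n n 𝕜)) :=
  (isCompact_univ_pi fun _ => isCompact_univ_pi fun _ => isCompact_closedBall (0 : 𝕜) 1)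
    |>.of_isClosed_subset (isClosed_unitary (R := Matrix n n 𝕜))
      fun A hA i _ j _ => by simpa using entry_norm_bound_of_unitary hA i j

instance {n 𝕜 : Type*} [Fintype n] [DecidableEq n] [RCLike 𝕜] :
    CompactSpace (unitaryGroup n 𝕜) :=
  isCompact_iff_compactSpace.mp (isCompact_unitaryGroup n 𝕜)

instance (n : ℕ) : BorelSpace (unitaryGroup (Fin n) ℂ) := ⟨rfl⟩

section rowMonomial

variable {m n ι : Type*} [Fintype ι]

def rowMonomial {R : Type*} [CommMonoid R] [StarMul R] (U : Matrix m n R) (i : m)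
    (J L : ι → n) : R :=
  (∏ k, U i (J k)) * ∏ k, star (U i (L k))

variable [Fintype n] [DecidableEq n]

theorem rowMonomial_mul_diagonal {R : Type*} [CommRing R] [StarRing R] (U : Matrix m n R)
    (i : m) (J L : ι → n) (f : n → R) :
    rowMonomial (U * diagonal f) i J L =
      (∏ k, f (J k)) * star (∏ k, f (L k)) * rowMonomial U i J L := by
  simp only [rowMonomial, mul_diagonal, prod_mul_distrib, star_mul', star_prod]
  ring

theorem rowMonomial_mul_diagonal_mulSingle (U : Matrix m n ℂ) (i : m) (J L : ι → n) (j : n)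
    {ζ : ℂ} (hζ : ζ ∈ unitary ℂ) :
    rowMonomial (U * diagonal (Pi.mulSingle j ζ)) i J L =
      ζ ^ ((#{k | J k = j} : ℤ) - #{k | L k = j}) * rowMonomial U i J L := by
  have hζ0 : ζ ≠ 0 := by rintro rfl; simpa using Unitary.star_mul_self_of_mem hζ
  rw [rowMonomial_mul_diagonal, prod_mulSingle_comp, prod_mulSingle_comp, star_pow,
    eq_inv_of_mul_eq_one_left (Unitary.star_mul_self_of_mem hζ), inv_pow, zpow_sub₀ hζ0,
    zpow_natCast, zpow_natCast, div_eq_mul_inv]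

end rowMonomial

end Matrix

/-- If the multi-indices `J` and `L` are not of the same type (no permutation `σ` of the
positions satisfies `J ∘ σ = L`), then
`∫ u_{1,j_1} ⋯ u_{1,j_d} conj(u_{1,l_1}) ⋯ conj(u_{1,l_d}) dμ(U) = 0` for the normalized
Haar measure `μ` on `U_n`. -/
theorem haar_integral_first_row_ne_type_eq_zero
    (n d : ℕ) (hn : 0 < n) (μ : Measure (Matrix.unitaryGroup (Fin n) ℂ))
    [IsProbabilityMeasure μ]
    (hinv : ∀ V : Matrix.unitaryGroup (Fin n) ℂ, μ.map (fun U => V * U) = μ)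
    (J L : Fin d → Fin n)
    (htype : ¬ ∃ σ : Equiv.Perm (Fin d), ∀ k, J (σ k) = L k) :
    (∫ U : Matrix.unitaryGroup (Fin n) ℂ,
        (∏ k : Fin d, (U : Matrix (Fin n) (Fin n) ℂ) ⟨0, hn⟩ (J k)) *
        (∏ k : Fin d, (starRingEnd ℂ) ((U : Matrix (Fin n) (Fin n) ℂ) ⟨0, hn⟩ (L k))) ∂μ) =
      0 := by
  obtain ⟨j, hj⟩ := exists_card_fiber_ne_of_forall_perm htype
  obtain ⟨ζ, hζ, hζ_pow⟩ := Complex.exists_mem_unitary_zpow_eq_neg_one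
    (sub_ne_zero.mpr (Nat.cast_injective.ne hj) : (#{k | J k = j} : ℤ) - #{k | L k = j} ≠ 0)
  have hD : diagonal (Pi.mulSingle j ζ) ∈ unitaryGroup (Fin n) ℂ :=
    diagonal_mem_unitaryGroup fun i => by
      rw [Pi.mulSingle_apply]
      split_ifs
      exacts [hζ, one_mem _]
  have : μ.IsMulLeftInvariant := ⟨hinv⟩
  have : μ.IsMulRightInvariant := isMulRightInvariant_of_compactSpace μ
  refine integral_eq_zero_of_apply_mul_right_eq_mul μ (g := ⟨_, hD⟩) (c := -1) (by norm_num)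
    fun U => ?_
  change rowMonomial (U.1 * diagonal (Pi.mulSingle j ζ)) ⟨0, hn⟩ J L =
    -1 * rowMonomial U.1 ⟨0, hn⟩ J L
  rw [rowMonomial_mul_diagonal_mulSingle _ _ _ _ _ hζ, hζ_pow]
end
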